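/- Let d ≥ 1, let u : ℝ^d → ℂ be a smooth compactly supported function, and let a : ℝ^d → ℝ be smooth. Then 2·Re ∫_{ℝ^d} (-Δ²u(x))·(Δa(x)·conj(u)(x) + 2·⟨∇a(x), ∇conj(u)(x)⟩) dx = ∫_{ℝ^d} (-Δ³a(x))·|u(x)|² dx + 2·∫_{ℝ^d} Δ²a(x)·|∇u(x)|² dx + 4·Re ∫_{ℝ^d} Σ_{j,k} ∂_j u(x)·∂_j∂_k (Δa)(x)·∂_k conj(u)(x) dx - 8·Re ∫_{ℝ^d} Σ_{j,k,l} ∂_j∂_k u(x)·∂_k∂_l a(x)·∂_l∂_j conj(u)(x) dx. -/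

import Mathlib

open MeasureTheory Complex

noncomputable section

/-- Partial derivative `∂_j f` of a complex-valued function on `ℝ^d`. -/
def pdC {d : ℕ} (j : Fin d) (f : EuclideanSpace ℝ (Fin d) → ℂ)
    (x : EuclideanSpace ℝ (Fin d)) : ℂ :=
  fderiv ℝ f x (EuclideanSpace.single j 1)

/-- Partial derivative `∂_j f` of a real-valued function on `ℝ^d`. -/
def pdR {d : ℕ} (j : Fin d) (f : EuclideanSpace ℝ (Fin d) → ℝ)
    (x : EuclideanSpace ℝ (Fin d)) : ℝ :=
  fderiv ℝ f x (EuclideanSpace.single j 1)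

/-- Laplacian of a complex-valued function on `ℝ^d`:
the trace of the second Fréchet derivative. -/
def lapC {d : ℕ} (f : EuclideanSpace ℝ (Fin d) → ℂ)
    (x : EuclideanSpace ℝ (Fin d)) : ℂ :=
  ∑ i : Fin d, iteratedFDeriv ℝ 2 f x
    ![EuclideanSpace.single i 1, EuclideanSpace.single i 1]

/-- Laplacian of a real-valued function on `ℝ^d`. -/
def lapR {d : ℕ} (f : EuclideanSpace ℝ (Fin d) → ℝ)
    (x : EuclideanSpace ℝ (Fin d)) : ℝ :=
  ∑ i : Fin d, iteratedFDeriv ℝ 2 f x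
    ![EuclideanSpace.single i 1, EuclideanSpace.single i 1]

namespace Morawetz
variable {d : ℕ}
local notation "E" => EuclideanSpace ℝ (Fin d)

theorem smC {f : E → ℂ} (hf : ContDiff ℝ (⊤ : ℕ∞) f) (j : Fin d) :
    ContDiff ℝ (⊤ : ℕ∞) (pdC j f) :=
  (hf.fderiv_right (m := (⊤ : ℕ∞)) (by exact_mod_cast le_top)).clm_apply contDiff_const

theorem smR {f : E → ℝ} (hf : ContDiff ℝ (⊤ : ℕ∞) f) (j : Fin d) :
    ContDiff ℝ (⊤ : ℕ∞) (pdR j f) :=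
  (hf.fderiv_right (m := (⊤ : ℕ∞)) (by exact_mod_cast le_top)).clm_apply contDiff_const

theorem csC {f : E → ℂ} (hf : HasCompactSupport f) (j : Fin d) :
    HasCompactSupport (pdC j f) :=
  hf.fderiv_apply (𝕜 := ℝ) (EuclideanSpace.single j 1)

theorem pdC_mul {f g : E → ℂ} {x : E} (hf : DifferentiableAt ℝ f x)
    (hg : DifferentiableAt ℝ g x) (j : Fin d) :
    pdC j (fun y => f y * g y) x = pdC j f x * g x + f x * pdC j g x := by
  unfold pdC
  rw [fderiv_fun_mul hf hg]
  simp only [ContinuousLinearMap.add_apply, ContinuousLinearMap.smul_apply, smul_eq_mul]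
  ring

theorem pdC_ofReal {c : E → ℝ} {x : E} (hc : DifferentiableAt ℝ c x) (j : Fin d) :
    pdC j (fun y => ((c y : ℝ) : ℂ)) x = ((pdR j c x : ℝ) : ℂ) := by
  unfold pdC pdR
  have h : HasFDerivAt (fun y => ((c y : ℝ) : ℂ))
      (Complex.ofRealCLM.comp (fderiv ℝ c x)) x :=
    Complex.ofRealCLM.hasFDerivAt.comp x hc.hasFDerivAt
  rw [h.fderiv]; rfl

theorem pdC_conj {f : E → ℂ} {x : E} (hf : DifferentiableAt ℝ f x) (j : Fin d) :
    pdC j (fun y => (starRingEnd ℂ) (f y)) x = (starRingEnd ℂ) (pdC j f x) := by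
  unfold pdC
  have h : HasFDerivAt (fun y => (starRingEnd ℂ) (f y))
      (Complex.conjCLE.toContinuousLinearMap.comp (fderiv ℝ f x)) x :=
    Complex.conjCLE.toContinuousLinearMap.hasFDerivAt.comp x hf.hasFDerivAt
  rw [h.fderiv]; rfl

theorem pdC_conj_fun {f : E → ℂ} (hf : ContDiff ℝ (⊤ : ℕ∞) f) (j : Fin d) :
    pdC j (fun y => (starRingEnd ℂ) (f y)) = fun x => (starRingEnd ℂ) (pdC j f x) :=
  funext fun x => pdC_conj ((hf.differentiable (by simp)).differentiableAt) j

theorem pdC_apply_pd {f : E → ℂ} (hf : ContDiff ℝ (⊤ : ℕ∞) f) (j k : Fin d) (x : E) :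
    pdC j (pdC k f) x
      = fderiv ℝ (fderiv ℝ f) x (EuclideanSpace.single j 1) (EuclideanSpace.single k 1) := by
  have hd : ContDiff ℝ (⊤ : ℕ∞) (fderiv ℝ f) :=
    hf.fderiv_right (m := (⊤ : ℕ∞)) (by exact_mod_cast le_top)
  unfold pdC
  rw [fderiv_clm_apply (hd.differentiable (by simp) x)
    (differentiableAt_const _)]
  simp

theorem pdC_comm {f : E → ℂ} (hf : ContDiff ℝ (⊤ : ℕ∞) f) (j k : Fin d) :
    pdC j (pdC k f) = pdC k (pdC j f) := by
  funext x
  rw [pdC_apply_pd hf j k x, pdC_apply_pd hf k j x]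
  exact (hf.contDiffAt.isSymmSndFDerivAt (by rw [minSmoothness_of_isRCLikeNormedField]; exact WithTop.coe_le_coe.mpr le_top)) _ _

theorem pdR_apply_pd {f : E → ℝ} (hf : ContDiff ℝ (⊤ : ℕ∞) f) (j k : Fin d) (x : E) :
    pdR j (pdR k f) x
      = fderiv ℝ (fderiv ℝ f) x (EuclideanSpace.single j 1) (EuclideanSpace.single k 1) := by
  have hd : ContDiff ℝ (⊤ : ℕ∞) (fderiv ℝ f) :=
    hf.fderiv_right (m := (⊤ : ℕ∞)) (by exact_mod_cast le_top)
  unfold pdR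
  rw [fderiv_clm_apply (hd.differentiable (by simp) x)
    (differentiableAt_const _)]
  simp

theorem pdR_comm {f : E → ℝ} (hf : ContDiff ℝ (⊤ : ℕ∞) f) (j k : Fin d) :
    pdR j (pdR k f) = pdR k (pdR j f) := by
  funext x
  rw [pdR_apply_pd hf j k x, pdR_apply_pd hf k j x]
  exact (hf.contDiffAt.isSymmSndFDerivAt (by rw [minSmoothness_of_isRCLikeNormedField]; exact WithTop.coe_le_coe.mpr le_top)) _ _

theorem lapC_pd {f : E → ℂ} (hf : ContDiff ℝ (⊤ : ℕ∞) f) :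
    lapC f = fun x => ∑ i, pdC i (pdC i f) x := by
  funext x
  unfold lapC
  refine Finset.sum_congr rfl fun i _ => ?_
  rw [iteratedFDeriv_two_apply, pdC_apply_pd hf i i x]
  simp

theorem lapR_pd {f : E → ℝ} (hf : ContDiff ℝ (⊤ : ℕ∞) f) :
    lapR f = fun x => ∑ i, pdR i (pdR i f) x := by
  funext x
  unfold lapR
  refine Finset.sum_congr rfl fun i _ => ?_
  rw [iteratedFDeriv_two_apply, pdR_apply_pd hf i i x]
  simp

theorem pdC_sum {ι : Type*} (s : Finset ι) {g : ι → E → ℂ}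
    (hg : ∀ i ∈ s, ContDiff ℝ (⊤ : ℕ∞) (g i)) (j : Fin d) :
    pdC j (fun x => ∑ i ∈ s, g i x) = fun x => ∑ i ∈ s, pdC j (g i) x := by
  funext x
  unfold pdC
  rw [fderiv_fun_sum (fun i hi =>
    ((hg i hi).differentiable (by simp)).differentiableAt)]
  simp

theorem pdR_sum {ι : Type*} (s : Finset ι) {g : ι → E → ℝ}
    (hg : ∀ i ∈ s, ContDiff ℝ (⊤ : ℕ∞) (g i)) (j : Fin d) :
    pdR j (fun x => ∑ i ∈ s, g i x) = fun x => ∑ i ∈ s, pdR j (g i) x := by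
  funext x
  unfold pdR
  rw [fderiv_fun_sum (fun i hi =>
    ((hg i hi).differentiable (by simp)).differentiableAt)]
  simp

def IT (c : EuclideanSpace ℝ (Fin d) → ℝ) (p q : EuclideanSpace ℝ (Fin d) → ℂ) : ℂ :=
  ∫ x, (c x : ℂ) * p x * q x

theorem IT_swap (c : E → ℝ) (p q : E → ℂ) : IT c p q = IT c q p := by
  unfold IT; congr 1; funext x; ring

theorem integrable_atom {c : E → ℝ} {p q : E → ℂ} (hc : Continuous c) (hp : Continuous p)
    (hq : Continuous q) (hps : HasCompactSupport p) :
    Integrable (fun x => (c x : ℂ) * p x * q x) := by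
  apply Continuous.integrable_of_hasCompactSupport
  · exact ((Complex.continuous_ofReal.comp hc).mul hp).mul hq
  · exact ((hps.mul_left).mul_right)

theorem ibp3 {c : E → ℝ} {p q : E → ℂ} (hc : ContDiff ℝ (⊤ : ℕ∞) c)
    (hp : ContDiff ℝ (⊤ : ℕ∞) p) (hq : ContDiff ℝ (⊤ : ℕ∞) q)
    (hps : HasCompactSupport p) (j : Fin d) :
    IT (pdR j c) p q + IT c (pdC j p) q + IT c p (pdC j q) = 0 := by
  have hcC : ContDiff ℝ (⊤ : ℕ∞) (fun x => ((c x : ℝ) : ℂ)) :=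
    Complex.ofRealCLM.contDiff.comp hc
  set f : E → ℂ := fun x => ((c x : ℝ) : ℂ) * p x with hf
  have hfC : ContDiff ℝ (⊤ : ℕ∞) f := hcC.mul hp
  have hfs : HasCompactSupport f := hps.mul_left
  have hdtop : ((⊤ : ℕ∞) : WithTop ℕ∞) ≠ 0 := by simp
  have hfd : Differentiable ℝ f := hfC.differentiable hdtop
  have hqd : Differentiable ℝ q := hq.differentiable hdtop
  have hpd : Differentiable ℝ p := hp.differentiable hdtop
  have hcd : Differentiable ℝ c := hc.differentiable hdtop
  have hder : ∀ x, fderiv ℝ f x (EuclideanSpace.single j 1)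
      = (pdR j c x : ℂ) * p x + (c x : ℂ) * pdC j p x := by
    intro x
    have h1 : fderiv ℝ f x (EuclideanSpace.single j 1) = pdC j f x := rfl
    rw [h1, hf]
    rw [pdC_mul ((hcC.differentiable hdtop).differentiableAt) (hpd.differentiableAt) j,
      pdC_ofReal (hcd.differentiableAt) j]
  have key := integral_mul_fderiv_eq_neg_fderiv_mul_of_integrable
    (μ := (volume : Measure E)) (f := f) (g := q) (v := EuclideanSpace.single j 1)
    ?_ ?_ ?_ (fun x _ => hfd x) (fun x _ => hqd x)
  · have h2 : (∫ x, f x * fderiv ℝ q x (EuclideanSpace.single j 1))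
        = IT c p (pdC j q) := by
      unfold IT; congr 1
    have h3 : (∫ x, fderiv ℝ f x (EuclideanSpace.single j 1) * q x)
        = IT (pdR j c) p q + IT c (pdC j p) q := by
      unfold IT
      rw [← integral_add (integrable_atom (smR hc j).continuous hp.continuous hq.continuous hps)
        (integrable_atom hc.continuous (smC hp j).continuous hq.continuous (csC hps j))]
      congr 1; funext x
      rw [hder x]; ring
    rw [h2, h3] at key
    linear_combination key
  · have : (fun x => fderiv ℝ f x (EuclideanSpace.single j 1) * q x)
        = fun x => (pdR j c x : ℂ) * p x * q x + (c x : ℂ) * pdC j p x * q x := by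
      funext x; rw [hder x]; ring
    rw [this]
    exact (integrable_atom (smR hc j).continuous hp.continuous hq.continuous hps).add
      (integrable_atom hc.continuous (smC hp j).continuous hq.continuous (csC hps j))
  · exact integrable_atom hc.continuous hp.continuous (smC hq j).continuous hps
  · exact integrable_atom hc.continuous hp.continuous hq.continuous hps

theorem ibp_jj {c : E → ℝ} {p q : E → ℂ} (hc : ContDiff ℝ (⊤ : ℕ∞) c)
    (hp : ContDiff ℝ (⊤ : ℕ∞) p) (hq : ContDiff ℝ (⊤ : ℕ∞) q)
    (hps : HasCompactSupport p) (j : Fin d) :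
    IT c (pdC j (pdC j p)) q = IT (pdR j (pdR j c)) p q + 2*(IT (pdR j c) p (pdC j q))
      + IT c p (pdC j (pdC j q)) := by
  have e1 := ibp3 hc (smC hp j) hq (csC hps j) j
  have e2 := ibp3 (smR hc j) hp hq hps j
  have e3 := ibp3 hc hp (smC hq j) hps j
  linear_combination e1 - e2 - e3

theorem sum3_congr {M : Type*} [AddCommMonoid M] {f g : Fin d → Fin d → Fin d → M}
    (h : ∀ i j k, f i j k = g i j k) :
    (∑ i, ∑ j, ∑ k, f i j k) = ∑ i, ∑ j, ∑ k, g i j k := by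
  refine Finset.sum_congr rfl fun i _ => Finset.sum_congr rfl fun j _ =>
    Finset.sum_congr rfl fun k _ => h i j k

theorem sum3_comm12 {M : Type*} [AddCommMonoid M] (f : Fin d → Fin d → Fin d → M) :
    (∑ i, ∑ j, ∑ k, f i j k) = ∑ j, ∑ i, ∑ k, f i j k := Finset.sum_comm

theorem sum3_comm23 {M : Type*} [AddCommMonoid M] (f : Fin d → Fin d → Fin d → M) :
    (∑ i, ∑ j, ∑ k, f i j k) = ∑ i, ∑ k, ∑ j, f i j k :=
  Finset.sum_congr rfl fun _ _ => Finset.sum_comm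

theorem sum3_rev {M : Type*} [AddCommMonoid M] (f : Fin d → Fin d → Fin d → M) :
    (∑ i, ∑ j, ∑ k, f i j k) = ∑ k, ∑ j, ∑ i, f i j k := by
  rw [sum3_comm12, sum3_comm23, sum3_comm12]

theorem sum3_add {M : Type*} [AddCommMonoid M] (f g : Fin d → Fin d → Fin d → M) :
    (∑ i, ∑ j, ∑ k, (f i j k + g i j k))
      = (∑ i, ∑ j, ∑ k, f i j k) + (∑ i, ∑ j, ∑ k, g i j k) := by
  simp [Finset.sum_add_distrib]

theorem sum3_neg {M : Type*} [AddCommGroup M] (f : Fin d → Fin d → Fin d → M) :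
    (∑ i, ∑ j, ∑ k, (-(f i j k))) = -(∑ i, ∑ j, ∑ k, f i j k) := by
  simp

theorem sum3_sub {M : Type*} [AddCommGroup M] (f g : Fin d → Fin d → Fin d → M) :
    (∑ i, ∑ j, ∑ k, (f i j k - g i j k))
      = (∑ i, ∑ j, ∑ k, f i j k) - (∑ i, ∑ j, ∑ k, g i j k) := by
  simp [Finset.sum_sub_distrib]

theorem sum3_cmul (c : ℂ) (f : Fin d → Fin d → Fin d → ℂ) :
    (∑ i, ∑ j, ∑ k, (c * f i j k)) = c * (∑ i, ∑ j, ∑ k, f i j k) := by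
  simp [Finset.mul_sum]

end Morawetz

namespace Morawetz
variable {d : ℕ}
local notation "E" => EuclideanSpace ℝ (Fin d)

theorem keyC {a : E → ℝ} {u v : E → ℂ} (ha : ContDiff ℝ (⊤ : ℕ∞) a)
    (hu : ContDiff ℝ (⊤ : ℕ∞) u) (hv : ContDiff ℝ (⊤ : ℕ∞) v)
    (hus : HasCompactSupport u) (hvs : HasCompactSupport v) :
    (∑ i, ∑ j, ∑ k, IT (pdR i (pdR i a)) (pdC j (pdC j (pdC k (pdC k u)))) v)
    + (∑ i, ∑ j, ∑ k, IT (pdR i (pdR i a)) (pdC j (pdC j (pdC k (pdC k v)))) u)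
    + 2*(∑ l, ∑ j, ∑ k, IT (pdR l a) (pdC j (pdC j (pdC k (pdC k u)))) (pdC l v))
    + 2*(∑ l, ∑ j, ∑ k, IT (pdR l a) (pdC j (pdC j (pdC k (pdC k v)))) (pdC l u))
    = (∑ i, ∑ j, ∑ k, IT (pdR k (pdR k (pdR j (pdR j (pdR i (pdR i a)))))) u v)
    - 2*(∑ i, ∑ j, ∑ k, IT (pdR j (pdR j (pdR i (pdR i a)))) (pdC k u) (pdC k v))
    - 4*(∑ i, ∑ j, ∑ k, IT (pdR j (pdR k (pdR i (pdR i a)))) (pdC j u) (pdC k v))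
    + 8*(∑ j, ∑ k, ∑ l, IT (pdR k (pdR l a)) (pdC j (pdC k u)) (pdC l (pdC j v))) := by
  -- double integration by parts for the Laplacian-squared factor
  have LA : ∀ (w z : E → ℂ), ContDiff ℝ (⊤ : ℕ∞) w → ContDiff ℝ (⊤ : ℕ∞) z →
      HasCompactSupport w →
      (∑ i, ∑ j, ∑ k, IT (pdR i (pdR i a)) (pdC j (pdC j (pdC k (pdC k w)))) z)
      = (∑ i, ∑ j, ∑ k, IT (pdR j (pdR j (pdR i (pdR i a)))) (pdC k (pdC k w)) z)
      + 2*(∑ i, ∑ j, ∑ k, IT (pdR j (pdR i (pdR i a))) (pdC k (pdC k w)) (pdC j z))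
      + (∑ i, ∑ j, ∑ k, IT (pdR i (pdR i a)) (pdC k (pdC k w)) (pdC j (pdC j z))) := by
    intro w z hw hz hws
    rw [sum3_congr (fun i j k => ibp_jj (smR (smR ha i) i) (smC (smC hw k) k) hz
      (csC (csC hws k) k) j), sum3_add, sum3_add, sum3_cmul]
  have LB : ∀ (w z : E → ℂ), ContDiff ℝ (⊤ : ℕ∞) w → ContDiff ℝ (⊤ : ℕ∞) z →
      HasCompactSupport w →
      (∑ l, ∑ j, ∑ k, IT (pdR l a) (pdC j (pdC j (pdC k (pdC k w)))) (pdC l z))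
      = (∑ l, ∑ j, ∑ k, IT (pdR j (pdR j (pdR l a))) (pdC k (pdC k w)) (pdC l z))
      + 2*(∑ l, ∑ j, ∑ k, IT (pdR j (pdR l a)) (pdC k (pdC k w)) (pdC j (pdC l z)))
      + (∑ l, ∑ j, ∑ k, IT (pdR l a) (pdC k (pdC k w)) (pdC j (pdC j (pdC l z)))) := by
    intro w z hw hz hws
    rw [sum3_congr (fun l j k => ibp_jj (smR ha l) (smC (smC hw k) k) (smC hz l)
      (csC (csC hws k) k) j), sum3_add, sum3_add, sum3_cmul]
  have hA := LA u v hu hv hus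
  have hAp := LA v u hv hu hvs
  have hB := LB u v hu hv hus
  have hBp := LB v u hv hu hvs
  -- A3p = A3
  have hA3p : (∑ i, ∑ j, ∑ k, IT (pdR i (pdR i a)) (pdC k (pdC k v)) (pdC j (pdC j u)))
      = (∑ i, ∑ j, ∑ k, IT (pdR i (pdR i a)) (pdC k (pdC k u)) (pdC j (pdC j v))) :=
    (sum3_congr (fun i j k => IT_swap _ _ _)).trans (sum3_comm23 _)
  -- B3 + B3p = -A3
  have hB3 : (∑ l, ∑ j, ∑ k, IT (pdR l a) (pdC k (pdC k u)) (pdC j (pdC j (pdC l v))))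
      + (∑ l, ∑ j, ∑ k, IT (pdR l a) (pdC k (pdC k v)) (pdC j (pdC j (pdC l u))))
      = -(∑ i, ∑ j, ∑ k, IT (pdR i (pdR i a)) (pdC k (pdC k u)) (pdC j (pdC j v))) := by
    have s1 : (∑ l, ∑ j, ∑ k, IT (pdR l a) (pdC k (pdC k u)) (pdC j (pdC j (pdC l v))))
        = ∑ l, ∑ j, ∑ k, IT (pdR l a) (pdC k (pdC k u)) (pdC l (pdC j (pdC j v))) :=
      sum3_congr (fun l j k => by rw [pdC_comm hv j l, pdC_comm (smC hv j) j l])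
    have s2 : (∑ l, ∑ j, ∑ k, IT (pdR l a) (pdC k (pdC k v)) (pdC j (pdC j (pdC l u))))
        = ∑ l, ∑ j, ∑ k, IT (pdR l a) (pdC l (pdC k (pdC k u))) (pdC j (pdC j v)) := by
      refine ((sum3_congr (fun l j k => ?_)).trans (sum3_comm23 _))
      rw [pdC_comm hu j l, pdC_comm (smC hu j) j l]
      exact IT_swap _ _ _
    rw [s1, s2, ← sum3_add]
    have := sum3_congr (fun l j k => show
        IT (pdR l a) (pdC k (pdC k u)) (pdC l (pdC j (pdC j v)))
        + IT (pdR l a) (pdC l (pdC k (pdC k u))) (pdC j (pdC j v))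
        = -(IT (pdR l (pdR l a)) (pdC k (pdC k u)) (pdC j (pdC j v))) from by
      linear_combination ibp3 (smR ha l) (smC (smC hu k) k) (smC (smC hv j) j)
        (csC (csC hus k) k) l)
    rw [this, sum3_neg]
  -- B1 = A2 and B1p = A2p
  have hB1 : (∑ l, ∑ j, ∑ k, IT (pdR j (pdR j (pdR l a))) (pdC k (pdC k u)) (pdC l v))
      = (∑ i, ∑ j, ∑ k, IT (pdR j (pdR i (pdR i a))) (pdC k (pdC k u)) (pdC j v)) := by
    refine ((sum3_congr (fun l j k => ?_)).trans (Finset.sum_comm))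
    rw [pdR_comm ha j l, pdR_comm (smR ha j) j l]
  have hB1p : (∑ l, ∑ j, ∑ k, IT (pdR j (pdR j (pdR l a))) (pdC k (pdC k v)) (pdC l u))
      = (∑ i, ∑ j, ∑ k, IT (pdR j (pdR i (pdR i a))) (pdC k (pdC k v)) (pdC j u)) := by
    refine ((sum3_congr (fun l j k => ?_)).trans (Finset.sum_comm))
    rw [pdR_comm ha j l, pdR_comm (smR ha j) j l]
  -- C1 block
  have h1 : (∑ i, ∑ j, ∑ k, IT (pdR j (pdR j (pdR i (pdR i a)))) (pdC k (pdC k u)) v)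
      = -(∑ i, ∑ j, ∑ k, IT (pdR k (pdR j (pdR j (pdR i (pdR i a))))) (pdC k u) v)
      - (∑ i, ∑ j, ∑ k, IT (pdR j (pdR j (pdR i (pdR i a)))) (pdC k u) (pdC k v)) := by
    rw [sum3_congr (fun i j k => show
      IT (pdR j (pdR j (pdR i (pdR i a)))) (pdC k (pdC k u)) v
      = -(IT (pdR k (pdR j (pdR j (pdR i (pdR i a))))) (pdC k u) v)
        - (IT (pdR j (pdR j (pdR i (pdR i a)))) (pdC k u) (pdC k v)) from by
      linear_combination ibp3 (smR (smR (smR (smR ha i) i) j) j) (smC hu k) hv (csC hus k) k)]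
    rw [sum3_sub, sum3_neg]
  have h1p : (∑ i, ∑ j, ∑ k, IT (pdR j (pdR j (pdR i (pdR i a)))) (pdC k (pdC k v)) u)
      = -(∑ i, ∑ j, ∑ k, IT (pdR k (pdR j (pdR j (pdR i (pdR i a))))) u (pdC k v))
      - (∑ i, ∑ j, ∑ k, IT (pdR j (pdR j (pdR i (pdR i a)))) (pdC k u) (pdC k v)) := by
    rw [sum3_congr (fun i j k => show
      IT (pdR j (pdR j (pdR i (pdR i a)))) (pdC k (pdC k v)) u
      = -(IT (pdR k (pdR j (pdR j (pdR i (pdR i a))))) u (pdC k v))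
        - (IT (pdR j (pdR j (pdR i (pdR i a)))) (pdC k u) (pdC k v)) from by
      have e := ibp3 (smR (smR (smR (smR ha i) i) j) j) (smC hv k) hu (csC hvs k) k
      have s1 := IT_swap (pdR k (pdR j (pdR j (pdR i (pdR i a))))) (pdC k v) u
      have s2 := IT_swap (pdR j (pdR j (pdR i (pdR i a)))) (pdC k v) (pdC k u)
      linear_combination e - s1 - s2)]
    rw [sum3_sub, sum3_neg]
  have hY : (∑ i, ∑ j, ∑ k, IT (pdR k (pdR j (pdR j (pdR i (pdR i a))))) (pdC k u) v)
      + (∑ i, ∑ j, ∑ k, IT (pdR k (pdR j (pdR j (pdR i (pdR i a))))) u (pdC k v))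
      = -(∑ i, ∑ j, ∑ k, IT (pdR k (pdR k (pdR j (pdR j (pdR i (pdR i a)))))) u v) := by
    rw [← sum3_add]
    rw [sum3_congr (fun i j k => show
      IT (pdR k (pdR j (pdR j (pdR i (pdR i a))))) (pdC k u) v
      + IT (pdR k (pdR j (pdR j (pdR i (pdR i a))))) u (pdC k v)
      = -(IT (pdR k (pdR k (pdR j (pdR j (pdR i (pdR i a)))))) u v) from by
      linear_combination ibp3 (smR (smR (smR (smR (smR ha i) i) j) j) k) hu hv hus k)]
    rw [sum3_neg]
  have hC1 : (∑ i, ∑ j, ∑ k, IT (pdR j (pdR j (pdR i (pdR i a)))) (pdC k (pdC k u)) v)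
      + (∑ i, ∑ j, ∑ k, IT (pdR j (pdR j (pdR i (pdR i a)))) (pdC k (pdC k v)) u)
      = (∑ i, ∑ j, ∑ k, IT (pdR k (pdR k (pdR j (pdR j (pdR i (pdR i a)))))) u v)
      - 2*(∑ i, ∑ j, ∑ k, IT (pdR j (pdR j (pdR i (pdR i a)))) (pdC k u) (pdC k v)) := by
    linear_combination h1 + h1p - hY
  -- C2 block
  have h2 : (∑ i, ∑ j, ∑ k, IT (pdR j (pdR i (pdR i a))) (pdC k (pdC k u)) (pdC j v))
      = -(∑ i, ∑ j, ∑ k, IT (pdR k (pdR j (pdR i (pdR i a)))) (pdC k u) (pdC j v))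
      - (∑ i, ∑ j, ∑ k, IT (pdR j (pdR i (pdR i a))) (pdC k u) (pdC k (pdC j v))) := by
    rw [sum3_congr (fun i j k => show
      IT (pdR j (pdR i (pdR i a))) (pdC k (pdC k u)) (pdC j v)
      = -(IT (pdR k (pdR j (pdR i (pdR i a)))) (pdC k u) (pdC j v))
        - (IT (pdR j (pdR i (pdR i a))) (pdC k u) (pdC k (pdC j v))) from by
      linear_combination ibp3 (smR (smR (smR ha i) i) j) (smC hu k) (smC hv j) (csC hus k) k)]
    rw [sum3_sub, sum3_neg]
  have h2p : (∑ i, ∑ j, ∑ k, IT (pdR j (pdR i (pdR i a))) (pdC k (pdC k v)) (pdC j u))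
      = -(∑ i, ∑ j, ∑ k, IT (pdR k (pdR j (pdR i (pdR i a)))) (pdC k v) (pdC j u))
      - (∑ i, ∑ j, ∑ k, IT (pdR j (pdR i (pdR i a))) (pdC k v) (pdC k (pdC j u))) := by
    rw [sum3_congr (fun i j k => show
      IT (pdR j (pdR i (pdR i a))) (pdC k (pdC k v)) (pdC j u)
      = -(IT (pdR k (pdR j (pdR i (pdR i a)))) (pdC k v) (pdC j u))
        - (IT (pdR j (pdR i (pdR i a))) (pdC k v) (pdC k (pdC j u))) from by
      linear_combination ibp3 (smR (smR (smR ha i) i) j) (smC hv k) (smC hu j) (csC hvs k) k)]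
    rw [sum3_sub, sum3_neg]
  have hG : (∑ i, ∑ j, ∑ k, IT (pdR j (pdR i (pdR i a))) (pdC k u) (pdC k (pdC j v)))
      + (∑ i, ∑ j, ∑ k, IT (pdR j (pdR i (pdR i a))) (pdC k v) (pdC k (pdC j u)))
      = -(∑ i, ∑ j, ∑ k, IT (pdR j (pdR j (pdR i (pdR i a)))) (pdC k u) (pdC k v)) := by
    have s1 : (∑ i, ∑ j, ∑ k, IT (pdR j (pdR i (pdR i a))) (pdC k u) (pdC k (pdC j v)))
        = ∑ i, ∑ j, ∑ k, IT (pdR j (pdR i (pdR i a))) (pdC k u) (pdC j (pdC k v)) :=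
      sum3_congr (fun i j k => by rw [pdC_comm hv k j])
    have s2 : (∑ i, ∑ j, ∑ k, IT (pdR j (pdR i (pdR i a))) (pdC k v) (pdC k (pdC j u)))
        = ∑ i, ∑ j, ∑ k, IT (pdR j (pdR i (pdR i a))) (pdC j (pdC k u)) (pdC k v) :=
      sum3_congr (fun i j k => by rw [pdC_comm hu k j]; exact IT_swap _ _ _)
    rw [s1, s2, ← sum3_add]
    rw [sum3_congr (fun i j k => show
      IT (pdR j (pdR i (pdR i a))) (pdC k u) (pdC j (pdC k v))
      + IT (pdR j (pdR i (pdR i a))) (pdC j (pdC k u)) (pdC k v)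
      = -(IT (pdR j (pdR j (pdR i (pdR i a)))) (pdC k u) (pdC k v)) from by
      linear_combination ibp3 (smR (smR (smR ha i) i) j) (smC hu k) (smC hv k) (csC hus k) j)]
    rw [sum3_neg]
  have hZ2 : (∑ i, ∑ j, ∑ k, IT (pdR k (pdR j (pdR i (pdR i a)))) (pdC k u) (pdC j v))
      = (∑ i, ∑ j, ∑ k, IT (pdR j (pdR k (pdR i (pdR i a)))) (pdC j u) (pdC k v)) := by
    calc (∑ i, ∑ j, ∑ k, IT (pdR k (pdR j (pdR i (pdR i a)))) (pdC k u) (pdC j v))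
        = ∑ i, ∑ j, ∑ k, IT (pdR j (pdR k (pdR i (pdR i a)))) (pdC k u) (pdC j v) :=
          sum3_congr (fun i j k => by rw [pdR_comm (smR (smR ha i) i) k j])
      _ = ∑ i, ∑ j, ∑ k, IT (pdR k (pdR j (pdR i (pdR i a)))) (pdC j u) (pdC k v) :=
          sum3_comm23 _
      _ = ∑ i, ∑ j, ∑ k, IT (pdR j (pdR k (pdR i (pdR i a)))) (pdC j u) (pdC k v) :=
          sum3_congr (fun i j k => by rw [pdR_comm (smR (smR ha i) i) k j])
  have hZ2p : (∑ i, ∑ j, ∑ k, IT (pdR k (pdR j (pdR i (pdR i a)))) (pdC k v) (pdC j u))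
      = (∑ i, ∑ j, ∑ k, IT (pdR j (pdR k (pdR i (pdR i a)))) (pdC j u) (pdC k v)) := by
    refine sum3_congr (fun i j k => ?_)
    rw [IT_swap, pdR_comm (smR (smR ha i) i) k j]
  have hC2 : (∑ i, ∑ j, ∑ k, IT (pdR j (pdR i (pdR i a))) (pdC k (pdC k u)) (pdC j v))
      + (∑ i, ∑ j, ∑ k, IT (pdR j (pdR i (pdR i a))) (pdC k (pdC k v)) (pdC j u))
      = -2*(∑ i, ∑ j, ∑ k, IT (pdR j (pdR k (pdR i (pdR i a)))) (pdC j u) (pdC k v))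
      + (∑ i, ∑ j, ∑ k, IT (pdR j (pdR j (pdR i (pdR i a)))) (pdC k u) (pdC k v)) := by
    linear_combination h2 + h2p - hG - hZ2 - hZ2p
  -- C3 block
  have hT : (∑ l, ∑ j, ∑ k, IT (pdR j (pdR l a)) (pdC k (pdC k u)) (pdC j (pdC l v)))
      = -(∑ l, ∑ j, ∑ k, IT (pdR k (pdR j (pdR l a))) (pdC k u) (pdC j (pdC l v)))
      - (∑ l, ∑ j, ∑ k, IT (pdR j (pdR l a)) (pdC k u) (pdC k (pdC j (pdC l v)))) := by
    rw [sum3_congr (fun l j k => show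
      IT (pdR j (pdR l a)) (pdC k (pdC k u)) (pdC j (pdC l v))
      = -(IT (pdR k (pdR j (pdR l a))) (pdC k u) (pdC j (pdC l v)))
        - (IT (pdR j (pdR l a)) (pdC k u) (pdC k (pdC j (pdC l v)))) from by
      linear_combination ibp3 (smR (smR ha l) j) (smC hu k) (smC (smC hv l) j) (csC hus k) k)]
    rw [sum3_sub, sum3_neg]
  have hT1 : (∑ l, ∑ j, ∑ k, IT (pdR k (pdR j (pdR l a))) (pdC k u) (pdC j (pdC l v)))
      = -(∑ l, ∑ j, ∑ k, IT (pdR j (pdR j (pdR k (pdR l a)))) (pdC k u) (pdC l v))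
      - (∑ l, ∑ j, ∑ k, IT (pdR j (pdR k (pdR l a))) (pdC j (pdC k u)) (pdC l v)) := by
    rw [sum3_congr (fun l j k => show
      IT (pdR k (pdR j (pdR l a))) (pdC k u) (pdC j (pdC l v))
      = IT (pdR j (pdR k (pdR l a))) (pdC k u) (pdC j (pdC l v)) from by
      rw [pdR_comm (smR ha l) k j])]
    rw [sum3_congr (fun l j k => show
      IT (pdR j (pdR k (pdR l a))) (pdC k u) (pdC j (pdC l v))
      = -(IT (pdR j (pdR j (pdR k (pdR l a)))) (pdC k u) (pdC l v))
        - (IT (pdR j (pdR k (pdR l a))) (pdC j (pdC k u)) (pdC l v)) from by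
      linear_combination ibp3 (smR (smR (smR ha l) k) j) (smC hu k) (smC hv l) (csC hus k) j)]
    rw [sum3_sub, sum3_neg]
  have hZb : (∑ l, ∑ j, ∑ k, IT (pdR j (pdR j (pdR k (pdR l a)))) (pdC k u) (pdC l v))
      = (∑ i, ∑ j, ∑ k, IT (pdR j (pdR k (pdR i (pdR i a)))) (pdC j u) (pdC k v)) := by
    have r1 : (∑ l, ∑ j, ∑ k, IT (pdR j (pdR j (pdR k (pdR l a)))) (pdC k u) (pdC l v))
        = (∑ j, ∑ l, ∑ k, IT (pdR j (pdR j (pdR k (pdR l a)))) (pdC k u) (pdC l v)) :=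
      sum3_comm12 _
    have r2 : (∑ j, ∑ l, ∑ k, IT (pdR j (pdR j (pdR k (pdR l a)))) (pdC k u) (pdC l v))
        = (∑ j, ∑ k, ∑ l, IT (pdR j (pdR j (pdR k (pdR l a)))) (pdC k u) (pdC l v)) :=
      sum3_comm23 _
    rw [r1, r2]
    refine sum3_congr (fun i j k => ?_)
    rw [pdR_comm (smR ha k) i j, pdR_comm (smR (smR ha k) i) i j,
      pdR_comm ha i k, pdR_comm (smR ha i) i k]
  have hK : (∑ l, ∑ j, ∑ k, IT (pdR j (pdR k (pdR l a))) (pdC j (pdC k u)) (pdC l v))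
      = -(∑ l, ∑ j, ∑ k, IT (pdR j (pdR k a)) (pdC l (pdC j (pdC k u))) (pdC l v))
      - (∑ l, ∑ j, ∑ k, IT (pdR j (pdR k a)) (pdC j (pdC k u)) (pdC l (pdC l v))) := by
    rw [sum3_congr (fun l j k => show
      IT (pdR j (pdR k (pdR l a))) (pdC j (pdC k u)) (pdC l v)
      = IT (pdR l (pdR j (pdR k a))) (pdC j (pdC k u)) (pdC l v) from by
      rw [pdR_comm ha k l, pdR_comm (smR ha k) j l])]
    rw [sum3_congr (fun l j k => show
      IT (pdR l (pdR j (pdR k a))) (pdC j (pdC k u)) (pdC l v)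
      = -(IT (pdR j (pdR k a)) (pdC l (pdC j (pdC k u))) (pdC l v))
        - (IT (pdR j (pdR k a)) (pdC j (pdC k u)) (pdC l (pdC l v))) from by
      linear_combination ibp3 (smR (smR ha k) j) (smC (smC hu k) j) (smC hv l)
        (csC (csC hus k) j) l)]
    rw [sum3_sub, sum3_neg]
  have hM : (∑ l, ∑ j, ∑ k, IT (pdR j (pdR k a)) (pdC l (pdC j (pdC k u))) (pdC l v))
      = -(∑ l, ∑ j, ∑ k, IT (pdR j (pdR j (pdR k a))) (pdC l (pdC k u)) (pdC l v))
      - (∑ l, ∑ j, ∑ k, IT (pdR j (pdR k a)) (pdC l (pdC k u)) (pdC j (pdC l v))) := by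
    rw [sum3_congr (fun l j k => show
      IT (pdR j (pdR k a)) (pdC l (pdC j (pdC k u))) (pdC l v)
      = IT (pdR j (pdR k a)) (pdC j (pdC l (pdC k u))) (pdC l v) from by
      rw [pdC_comm (smC hu k) l j])]
    rw [sum3_congr (fun l j k => show
      IT (pdR j (pdR k a)) (pdC j (pdC l (pdC k u))) (pdC l v)
      = -(IT (pdR j (pdR j (pdR k a))) (pdC l (pdC k u)) (pdC l v))
        - (IT (pdR j (pdR k a)) (pdC l (pdC k u)) (pdC j (pdC l v))) from by
      linear_combination ibp3 (smR (smR ha k) j) (smC (smC hu k) l) (smC hv l)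
        (csC (csC hus k) l) j)]
    rw [sum3_sub, sum3_neg]
  have hP : (∑ l, ∑ j, ∑ k, IT (pdR j (pdR j (pdR k a))) (pdC l (pdC k u)) (pdC l v))
      = -(∑ l, ∑ j, ∑ k, IT (pdR k (pdR j (pdR j (pdR k a)))) (pdC l u) (pdC l v))
      - (∑ l, ∑ j, ∑ k, IT (pdR j (pdR j (pdR k a))) (pdC l u) (pdC k (pdC l v))) := by
    rw [sum3_congr (fun l j k => show
      IT (pdR j (pdR j (pdR k a))) (pdC l (pdC k u)) (pdC l v)
      = IT (pdR j (pdR j (pdR k a))) (pdC k (pdC l u)) (pdC l v) from by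
      rw [pdC_comm hu l k])]
    rw [sum3_congr (fun l j k => show
      IT (pdR j (pdR j (pdR k a))) (pdC k (pdC l u)) (pdC l v)
      = -(IT (pdR k (pdR j (pdR j (pdR k a)))) (pdC l u) (pdC l v))
        - (IT (pdR j (pdR j (pdR k a))) (pdC l u) (pdC k (pdC l v))) from by
      linear_combination ibp3 (smR (smR (smR ha k) j) j) (smC hu l) (smC hv l)
        (csC hus l) k)]
    rw [sum3_sub, sum3_neg]
  have hDDx : (∑ l, ∑ j, ∑ k, IT (pdR k (pdR j (pdR j (pdR k a)))) (pdC l u) (pdC l v))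
      = (∑ i, ∑ j, ∑ k, IT (pdR j (pdR j (pdR i (pdR i a)))) (pdC k u) (pdC k v)) := by
    rw [sum3_congr (fun l j k => show
      IT (pdR k (pdR j (pdR j (pdR k a)))) (pdC l u) (pdC l v)
      = IT (pdR j (pdR j (pdR k (pdR k a)))) (pdC l u) (pdC l v) from by
      rw [pdR_comm (smR (smR ha k) j) k j, pdR_comm (smR ha k) k j])]
    exact sum3_rev _
  have hQx : (∑ l, ∑ j, ∑ k, IT (pdR j (pdR j (pdR k a))) (pdC l u) (pdC k (pdC l v)))
      = (∑ l, ∑ j, ∑ k, IT (pdR j (pdR j (pdR l a))) (pdC k u) (pdC k (pdC l v))) := by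
    rw [sum3_congr (fun l j k => show
      IT (pdR j (pdR j (pdR k a))) (pdC l u) (pdC k (pdC l v))
      = IT (pdR j (pdR j (pdR k a))) (pdC l u) (pdC l (pdC k v)) from by
      rw [pdC_comm hv k l])]
    exact sum3_rev _
  have hT2 : (∑ l, ∑ j, ∑ k, IT (pdR j (pdR l a)) (pdC k u) (pdC k (pdC j (pdC l v))))
      = -(∑ l, ∑ j, ∑ k, IT (pdR j (pdR j (pdR l a))) (pdC k u) (pdC k (pdC l v)))
      - (∑ l, ∑ j, ∑ k, IT (pdR j (pdR l a)) (pdC j (pdC k u)) (pdC k (pdC l v))) := by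
    rw [sum3_congr (fun l j k => show
      IT (pdR j (pdR l a)) (pdC k u) (pdC k (pdC j (pdC l v)))
      = IT (pdR j (pdR l a)) (pdC k u) (pdC j (pdC k (pdC l v))) from by
      rw [pdC_comm (smC hv l) k j])]
    rw [sum3_congr (fun l j k => show
      IT (pdR j (pdR l a)) (pdC k u) (pdC j (pdC k (pdC l v)))
      = -(IT (pdR j (pdR j (pdR l a))) (pdC k u) (pdC k (pdC l v)))
        - (IT (pdR j (pdR l a)) (pdC j (pdC k u)) (pdC k (pdC l v))) from by
      linear_combination ibp3 (smR (smR ha l) j) (smC hu k) (smC (smC hv l) k) (csC hus k) j)]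
    rw [sum3_sub, sum3_neg]
  have hWb : (∑ l, ∑ j, ∑ k, IT (pdR j (pdR l a)) (pdC j (pdC k u)) (pdC k (pdC l v)))
      = (∑ j, ∑ k, ∑ l, IT (pdR k (pdR l a)) (pdC j (pdC k u)) (pdC l (pdC j v))) := by
    rw [sum3_congr (fun l j k => show
      IT (pdR j (pdR l a)) (pdC j (pdC k u)) (pdC k (pdC l v))
      = IT (pdR j (pdR l a)) (pdC k (pdC j u)) (pdC l (pdC k v)) from by
      rw [pdC_comm hu j k, pdC_comm hv k l])]
    exact sum3_rev _
  have hWd : (∑ l, ∑ j, ∑ k, IT (pdR j (pdR k a)) (pdC l (pdC k u)) (pdC j (pdC l v)))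
      = (∑ j, ∑ k, ∑ l, IT (pdR k (pdR l a)) (pdC j (pdC k u)) (pdC l (pdC j v))) := by
    rw [sum3_congr (fun l j k => show
      IT (pdR j (pdR k a)) (pdC l (pdC k u)) (pdC j (pdC l v))
      = IT (pdR k (pdR j a)) (pdC l (pdC k u)) (pdC j (pdC l v)) from by
      rw [pdR_comm ha j k])]
    exact sum3_comm23 _
  have hCp3x : (∑ l, ∑ j, ∑ k, IT (pdR j (pdR l a)) (pdC k (pdC k v)) (pdC j (pdC l u)))
      = (∑ l, ∑ j, ∑ k, IT (pdR j (pdR k a)) (pdC j (pdC k u)) (pdC l (pdC l v))) := by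
    rw [sum3_congr (fun l j k => show
      IT (pdR j (pdR l a)) (pdC k (pdC k v)) (pdC j (pdC l u))
      = IT (pdR j (pdR l a)) (pdC j (pdC l u)) (pdC k (pdC k v)) from IT_swap _ _ _)]
    exact sum3_rev _
  have hC3 : (∑ l, ∑ j, ∑ k, IT (pdR j (pdR l a)) (pdC k (pdC k u)) (pdC j (pdC l v)))
      + (∑ l, ∑ j, ∑ k, IT (pdR j (pdR l a)) (pdC k (pdC k v)) (pdC j (pdC l u)))
      = (∑ i, ∑ j, ∑ k, IT (pdR j (pdR k (pdR i (pdR i a)))) (pdC j u) (pdC k v))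
      - (∑ i, ∑ j, ∑ k, IT (pdR j (pdR j (pdR i (pdR i a)))) (pdC k u) (pdC k v))
      + 2*(∑ j, ∑ k, ∑ l, IT (pdR k (pdR l a)) (pdC j (pdC k u)) (pdC l (pdC j v))) := by
    linear_combination hT - hT1 - hT2 + hK - hM + hP - hQx + hZb - hDDx + hWb + hWd + hCp3x
  linear_combination hA + hAp + 2*hB + 2*hBp + hA3p + 2*hB3 + 2*hB1 + 2*hB1p
    + hC1 + 4*hC2 + 4*hC3

end Morawetz

namespace Morawetz
variable {d : ℕ}
local notation "E" => EuclideanSpace ℝ (Fin d)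

theorem sum2_neg_mul (f : Fin d → Fin d → ℂ) (c : ℂ) :
    (-(∑ j, ∑ k, f j k)) * c = ∑ j, ∑ k, (-(f j k * c)) := by
  simp [Finset.sum_mul]

theorem help1 (p q : ℂ) (g : Fin d → ℂ) :
    -(p * ((∑ i, g i) * q)) = ∑ i, (-(g i * p * q)) := by
  rw [Finset.sum_mul, Finset.mul_sum, ← Finset.sum_neg_distrib]
  exact Finset.sum_congr rfl fun i _ => by ring

theorem help2 (p : ℂ) (g h : Fin d → ℂ) :
    -(p * (2 * ∑ l, (g l * h l))) = ∑ l, (-(2 * (g l * p * h l))) := by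
  rw [Finset.mul_sum, Finset.mul_sum, ← Finset.sum_neg_distrib]
  exact Finset.sum_congr rfl fun l _ => by ring

/-- conversion of one half of the Morawetz pairing integral into atoms -/
theorem cvtMain {a : E → ℝ} (ha : ContDiff ℝ (⊤ : ℕ∞) a) (w z : E → ℂ)
    (hw : ContDiff ℝ (⊤ : ℕ∞) w) (hz : ContDiff ℝ (⊤ : ℕ∞) z) (hws : HasCompactSupport w) :
    (∫ x, (-(∑ j, ∑ k, pdC j (pdC j (pdC k (pdC k w))) x))
        * ((lapR a x : ℂ) * z x + 2 * ∑ l, (pdR l a x : ℂ) * pdC l z x))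
    = -(∑ i, ∑ j, ∑ k, IT (pdR i (pdR i a)) (pdC j (pdC j (pdC k (pdC k w)))) z)
      - 2 * (∑ l, ∑ j, ∑ k, IT (pdR l a) (pdC j (pdC j (pdC k (pdC k w)))) (pdC l z)) := by
  have hUsm : ∀ j k : Fin d, ContDiff ℝ (⊤ : ℕ∞) (pdC j (pdC j (pdC k (pdC k w)))) :=
    fun j k => smC (smC (smC (smC hw k) k) j) j
  have hUcs : ∀ j k : Fin d, HasCompactSupport (pdC j (pdC j (pdC k (pdC k w)))) :=
    fun j k => csC (csC (csC (csC hws k) k) j) j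
  have hint1 : ∀ i j k : Fin d, Integrable (fun x =>
      (-(((pdR i (pdR i a) x : ℝ) : ℂ) * pdC j (pdC j (pdC k (pdC k w))) x * z x))) :=
    fun i j k => (integrable_atom (smR (smR ha i) i).continuous (hUsm j k).continuous
      hz.continuous (hUcs j k)).neg
  have hint2 : ∀ l j k : Fin d, Integrable (fun x =>
      (-(2 * (((pdR l a x : ℝ) : ℂ) * pdC j (pdC j (pdC k (pdC k w))) x * pdC l z x)))) :=
    fun l j k => ((integrable_atom (smR ha l).continuous (hUsm j k).continuous
      (smC hz l).continuous (hUcs j k)).const_mul 2).neg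
  have hLax : ∀ x : E, ((lapR a x : ℝ) : ℂ) = ∑ i, ((pdR i (pdR i a) x : ℝ) : ℂ) := by
    intro x; rw [lapR_pd ha]; push_cast; simp
  have hpt : (fun x => (-(∑ j, ∑ k, pdC j (pdC j (pdC k (pdC k w))) x))
        * ((lapR a x : ℂ) * z x + 2 * ∑ l, (pdR l a x : ℂ) * pdC l z x))
      = fun x => (∑ j, ∑ k, ((∑ i,
          (-(((pdR i (pdR i a) x : ℝ) : ℂ) * pdC j (pdC j (pdC k (pdC k w))) x * z x)))
        + (∑ l,
          (-(2 * (((pdR l a x : ℝ) : ℂ) * pdC j (pdC j (pdC k (pdC k w))) x * pdC l z x)))))) := by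
    funext x
    rw [sum2_neg_mul]
    refine Finset.sum_congr rfl fun j _ => Finset.sum_congr rfl fun k _ => ?_
    rw [hLax x, mul_add, neg_add]
    congr 1
    · exact help1 _ _ _
    · exact help2 _ _ _
  have hintjk : ∀ j k : Fin d, Integrable (fun x => ((∑ i,
        (-(((pdR i (pdR i a) x : ℝ) : ℂ) * pdC j (pdC j (pdC k (pdC k w))) x * z x)))
        + (∑ l,
        (-(2 * (((pdR l a x : ℝ) : ℂ) * pdC j (pdC j (pdC k (pdC k w))) x * pdC l z x)))))) :=
    fun j k => (integrable_finset_sum _ (fun i _ => hint1 i j k)).add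
      (integrable_finset_sum _ (fun l _ => hint2 l j k))
  rw [hpt]
  rw [integral_finset_sum _ (fun j _ => integrable_finset_sum _ (fun k _ => hintjk j k))]
  have ejk : ∀ j k : Fin d, (∫ x, ((∑ i,
        (-(((pdR i (pdR i a) x : ℝ) : ℂ) * pdC j (pdC j (pdC k (pdC k w))) x * z x)))
        + (∑ l,
        (-(2 * (((pdR l a x : ℝ) : ℂ) * pdC j (pdC j (pdC k (pdC k w))) x * pdC l z x))))))
      = (∑ i, (-(IT (pdR i (pdR i a)) (pdC j (pdC j (pdC k (pdC k w)))) z)))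
        + (∑ l, (-(2 * IT (pdR l a) (pdC j (pdC j (pdC k (pdC k w)))) (pdC l z)))) := by
    intro j k
    rw [integral_add (integrable_finset_sum _ (fun i _ => hint1 i j k))
      (integrable_finset_sum _ (fun l _ => hint2 l j k))]
    congr 1
    · rw [integral_finset_sum _ (fun i _ => hint1 i j k)]
      refine Finset.sum_congr rfl fun i _ => ?_
      rw [integral_neg]; rfl
    · rw [integral_finset_sum _ (fun l _ => hint2 l j k)]
      refine Finset.sum_congr rfl fun l _ => ?_
      rw [integral_neg, integral_const_mul]; rfl
  refine Eq.trans (Finset.sum_congr rfl (fun j _ => Eq.trans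
    (integral_finset_sum _ (fun k _ => hintjk j k))
    (Finset.sum_congr rfl (fun k _ => ejk j k)))) ?_
  refine Eq.trans (Finset.sum_congr rfl (fun j _ => Finset.sum_add_distrib)) ?_
  refine Eq.trans Finset.sum_add_distrib ?_
  have r1 : (∑ j, ∑ k, ∑ i : Fin d,
      (-(IT (pdR i (pdR i a)) (pdC j (pdC j (pdC k (pdC k w)))) z)))
      = -(∑ i, ∑ j, ∑ k, IT (pdR i (pdR i a)) (pdC j (pdC j (pdC k (pdC k w)))) z) := by
    rw [sum3_neg (fun j k i => IT (pdR i (pdR i a)) (pdC j (pdC j (pdC k (pdC k w)))) z),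
      sum3_comm23 (fun j k i => IT (pdR i (pdR i a)) (pdC j (pdC j (pdC k (pdC k w)))) z),
      sum3_comm12 (fun j i k => IT (pdR i (pdR i a)) (pdC j (pdC j (pdC k (pdC k w)))) z)]
  have r2 : (∑ j, ∑ k, ∑ l : Fin d,
      (-(2 * IT (pdR l a) (pdC j (pdC j (pdC k (pdC k w)))) (pdC l z))))
      = -(2 * (∑ l, ∑ j, ∑ k, IT (pdR l a) (pdC j (pdC j (pdC k (pdC k w)))) (pdC l z))) := by
    rw [sum3_neg (fun j k l => 2 * IT (pdR l a) (pdC j (pdC j (pdC k (pdC k w)))) (pdC l z)),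
      sum3_cmul 2 (fun j k l => IT (pdR l a) (pdC j (pdC j (pdC k (pdC k w)))) (pdC l z)),
      sum3_rev (fun j k l => IT (pdR l a) (pdC j (pdC j (pdC k (pdC k w)))) (pdC l z)),
      sum3_comm23 (fun l k j => IT (pdR l a) (pdC j (pdC j (pdC k (pdC k w)))) (pdC l z))]
  rw [r1, r2]
  ring

end Morawetz

namespace Morawetz
variable {d : ℕ}
local notation "E" => EuclideanSpace ℝ (Fin d)

theorem integrable_atomR {c n : E → ℝ} (hc : Continuous c) (hn : Continuous n)
    (hns : HasCompactSupport n) : Integrable (fun x => c x * n x) :=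
  (hc.mul hn).integrable_of_hasCompactSupport hns.mul_left

end Morawetz


open Morawetz

/-- **Biharmonic Morawetz integration-by-parts identity** (the `Δ²`-part of eq. 3.9 in
the proof of Proposition 3.1 of the paper). For `u : ℝ^d → ℂ` smooth and compactly
supported and `a : ℝ^d → ℝ` smooth:
`2 Re ∫ (-Δ²u)·(Δa·conj u + 2⟨∇a, ∇ conj u⟩)
  = ∫ (-Δ³a)·|u|² + 2∫ Δ²a·|∇u|² + 4 Re ∫ Σ_{j,k} ∂_j u·∂_j∂_k(Δa)·∂_k conj u
    - 8 Re ∫ Σ_{j,k,l} ∂_j∂_k u·∂_k∂_l a·∂_l∂_j conj u`. -/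
theorem morawetz_biharmonic_identity (d : ℕ) (hd : 1 ≤ d)
    (u : EuclideanSpace ℝ (Fin d) → ℂ)
    (hu : ContDiff ℝ (⊤ : ℕ∞) u) (husupp : HasCompactSupport u)
    (a : EuclideanSpace ℝ (Fin d) → ℝ) (ha : ContDiff ℝ (⊤ : ℕ∞) a) :
    2 * (∫ x, (-(lapC (lapC u) x)) * ((lapR a x : ℂ) * (starRingEnd ℂ) (u x)
          + 2 * ∑ j, (pdR j a x : ℂ)
              * pdC j (fun y => (starRingEnd ℂ) (u y)) x)).re
      = (∫ x, (-(lapR (lapR (lapR a)) x)) * Complex.normSq (u x))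
        + 2 * (∫ x, lapR (lapR a) x * ∑ j, Complex.normSq (pdC j u x))
        + 4 * (∫ x, ∑ j, ∑ k, pdC j u x * (pdR j (pdR k (lapR a)) x : ℂ)
            * pdC k (fun y => (starRingEnd ℂ) (u y)) x).re
        - 8 * (∫ x, ∑ j, ∑ k, ∑ l, pdC j (pdC k u) x * (pdR k (pdR l a) x : ℂ)
            * pdC l (pdC j (fun y => (starRingEnd ℂ) (u y))) x).re := by
  have hcv : ContDiff ℝ (⊤ : ℕ∞) (fun y => (starRingEnd ℂ) (u y)) :=
    Complex.conjCLE.toContinuousLinearMap.contDiff.comp hu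
  have hcvs : HasCompactSupport (fun y => (starRingEnd ℂ) (u y)) :=
    husupp.comp_left (g := starRingEnd ℂ) (map_zero _)
  have hLa : ContDiff ℝ (⊤ : ℕ∞) (lapR a) := by
    rw [lapR_pd ha]; exact ContDiff.sum (fun i _ => smR (smR ha i) i)
  have hLLa : ContDiff ℝ (⊤ : ℕ∞) (lapR (lapR a)) := by
    rw [lapR_pd hLa]; exact ContDiff.sum (fun j _ => smR (smR hLa j) j)
  have hLu : ContDiff ℝ (⊤ : ℕ∞) (lapC u) := by
    rw [lapC_pd hu]; exact ContDiff.sum (fun k _ => smC (smC hu k) k)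
  have hLap2C : lapC (lapC u) = fun x => ∑ j, ∑ k, pdC j (pdC j (pdC k (pdC k u))) x := by
    rw [lapC_pd hLu]
    funext x
    refine Finset.sum_congr rfl fun j _ => ?_
    rw [lapC_pd hu, pdC_sum Finset.univ (fun k _ => smC (smC hu k) k) j,
      pdC_sum Finset.univ (fun k _ => smC (smC (smC hu k) k) j) j]
  have hZjk : ∀ (j k : Fin d) (x : EuclideanSpace ℝ (Fin d)), pdR j (pdR k (lapR a)) x
      = ∑ i, pdR j (pdR k (pdR i (pdR i a))) x := by
    intro j k x
    rw [lapR_pd ha, pdR_sum Finset.univ (fun i _ => smR (smR ha i) i) k,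
      pdR_sum Finset.univ (fun i _ => smR (smR (smR ha i) i) k) j]
  have hL2fun : ∀ x : EuclideanSpace ℝ (Fin d), lapR (lapR a) x = ∑ j, ∑ i, pdR j (pdR j (pdR i (pdR i a))) x := by
    intro x
    rw [lapR_pd hLa]
    exact Finset.sum_congr rfl fun j _ => hZjk j j x
  have hL3fun : ∀ x : EuclideanSpace ℝ (Fin d), lapR (lapR (lapR a)) x
      = ∑ k, ∑ j, ∑ i, pdR k (pdR k (pdR j (pdR j (pdR i (pdR i a))))) x := by
    intro x
    rw [lapR_pd hLLa]
    refine Finset.sum_congr rfl fun k _ => ?_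
    rw [show lapR (lapR a) = fun x => ∑ j, ∑ i, pdR j (pdR j (pdR i (pdR i a))) x from
      funext hL2fun]
    rw [pdR_sum Finset.univ (fun j _ => ContDiff.sum
      (fun i _ => smR (smR (smR (smR ha i) i) j) j)) k]
    rw [pdR_sum Finset.univ (fun j _ => smR (ContDiff.sum
      (fun i _ => smR (smR (smR (smR ha i) i) j) j)) k) k]
    refine Finset.sum_congr rfl fun j _ => ?_
    rw [pdR_sum Finset.univ (fun i _ => smR (smR (smR (smR ha i) i) j) j) k,
      pdR_sum Finset.univ (fun i _ => smR (smR (smR (smR (smR ha i) i) j) j) k) k]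
  have hVc : ∀ (l : Fin d) (x : EuclideanSpace ℝ (Fin d)), pdC l (fun y => (starRingEnd ℂ) (u y)) x
      = (starRingEnd ℂ) (pdC l u x) := fun l x => congrFun (pdC_conj_fun hu l) x
  have hVc2fun : ∀ j : Fin d, pdC j (fun y => (starRingEnd ℂ) (u y))
      = fun x => (starRingEnd ℂ) (pdC j u x) := fun j => pdC_conj_fun hu j
  have hVc2 : ∀ (l j : Fin d) (x : EuclideanSpace ℝ (Fin d)), pdC l (pdC j (fun y => (starRingEnd ℂ) (u y))) x
      = (starRingEnd ℂ) (pdC l (pdC j u) x) := by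
    intro l j x
    rw [hVc2fun j]
    exact congrFun (pdC_conj_fun (smC hu j) l) x
  have hU2fun : ∀ k : Fin d, pdC k (pdC k (fun y => (starRingEnd ℂ) (u y)))
      = fun x => (starRingEnd ℂ) (pdC k (pdC k u) x) := by
    intro k
    rw [hVc2fun k]
    exact pdC_conj_fun (smC hu k) k
  have hU3fun : ∀ j k : Fin d, pdC j (pdC k (pdC k (fun y => (starRingEnd ℂ) (u y))))
      = fun x => (starRingEnd ℂ) (pdC j (pdC k (pdC k u)) x) := by
    intro j k
    rw [hU2fun k]
    exact pdC_conj_fun (smC (smC hu k) k) j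
  have hU4 : ∀ (j k : Fin d) (x : EuclideanSpace ℝ (Fin d)),
      pdC j (pdC j (pdC k (pdC k (fun y => (starRingEnd ℂ) (u y))))) x
      = (starRingEnd ℂ) (pdC j (pdC j (pdC k (pdC k u))) x) := by
    intro j k x
    rw [hU3fun j k]
    exact congrFun (pdC_conj_fun (smC (smC (smC hu k) k) j) j) x
  have key := keyC (v := fun y => (starRingEnd ℂ) (u y)) ha hu hcv husupp hcvs
  -- the left-hand integral
  have hX : (∫ x, (-(lapC (lapC u) x)) * ((lapR a x : ℂ) * (starRingEnd ℂ) (u x)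
        + 2 * ∑ j, (pdR j a x : ℂ) * pdC j (fun y => (starRingEnd ℂ) (u y)) x))
      = -(∑ i, ∑ j, ∑ k, IT (pdR i (pdR i a)) (pdC j (pdC j (pdC k (pdC k u))))
          (fun y => (starRingEnd ℂ) (u y)))
        - 2 * (∑ l, ∑ j, ∑ k, IT (pdR l a) (pdC j (pdC j (pdC k (pdC k u))))
          (pdC l (fun y => (starRingEnd ℂ) (u y)))) := by
    rw [show (fun x => (-(lapC (lapC u) x)) * ((lapR a x : ℂ) * (starRingEnd ℂ) (u x)
        + 2 * ∑ j, (pdR j a x : ℂ) * pdC j (fun y => (starRingEnd ℂ) (u y)) x))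
      = fun x => (-(∑ j, ∑ k, pdC j (pdC j (pdC k (pdC k u))) x))
          * ((lapR a x : ℂ) * (fun y => (starRingEnd ℂ) (u y)) x
            + 2 * ∑ l, (pdR l a x : ℂ) * pdC l (fun y => (starRingEnd ℂ) (u y)) x)
      from funext fun x => by rw [hLap2C]]
    exact cvtMain ha u (fun y => (starRingEnd ℂ) (u y)) hu hcv husupp
  have hXc : (starRingEnd ℂ) (∫ x, (-(lapC (lapC u) x)) * ((lapR a x : ℂ)
        * (starRingEnd ℂ) (u x)
        + 2 * ∑ j, (pdR j a x : ℂ) * pdC j (fun y => (starRingEnd ℂ) (u y)) x))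
      = -(∑ i, ∑ j, ∑ k, IT (pdR i (pdR i a))
          (pdC j (pdC j (pdC k (pdC k (fun y => (starRingEnd ℂ) (u y)))))) u)
        - 2 * (∑ l, ∑ j, ∑ k, IT (pdR l a)
          (pdC j (pdC j (pdC k (pdC k (fun y => (starRingEnd ℂ) (u y)))))) (pdC l u)) := by
    rw [← integral_conj]
    rw [show (fun x => (starRingEnd ℂ) ((-(lapC (lapC u) x)) * ((lapR a x : ℂ)
          * (starRingEnd ℂ) (u x)
          + 2 * ∑ j, (pdR j a x : ℂ) * pdC j (fun y => (starRingEnd ℂ) (u y)) x)))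
      = fun x => (-(∑ j, ∑ k,
            pdC j (pdC j (pdC k (pdC k (fun y => (starRingEnd ℂ) (u y))))) x))
          * ((lapR a x : ℂ) * u x + 2 * ∑ l, (pdR l a x : ℂ) * pdC l u x)
      from funext fun x => by
        simp only [hLap2C, map_mul, map_neg, map_add, map_sum, Complex.conj_conj,
          Complex.conj_ofReal, hVc, hU4, map_ofNat]]
    exact cvtMain ha (fun y => (starRingEnd ℂ) (u y)) u hcv hu hcvs
  -- real-form atoms
  have hnsq : HasCompactSupport (fun x => Complex.normSq (u x)) :=
    husupp.comp_left (g := Complex.normSq) (by simp)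
  have hnsqk : ∀ k : Fin d, HasCompactSupport (fun x => Complex.normSq (pdC k u x)) :=
    fun k => (csC husupp k).comp_left (g := Complex.normSq) (by simp)
  have hcnsq : Continuous fun x => Complex.normSq (u x) :=
    Complex.continuous_normSq.comp hu.continuous
  have hcnsqk : ∀ k : Fin d, Continuous fun x => Complex.normSq (pdC k u x) :=
    fun k => Complex.continuous_normSq.comp (smC hu k).continuous
  have atomu : ∀ c : EuclideanSpace ℝ (Fin d) → ℝ,
      IT c u (fun y => (starRingEnd ℂ) (u y))
      = ((∫ x, c x * Complex.normSq (u x) : ℝ) : ℂ) := by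
    intro c
    rw [show IT c u (fun y => (starRingEnd ℂ) (u y))
        = ∫ x, ((c x * Complex.normSq (u x) : ℝ) : ℂ) from by
      unfold IT
      congr 1; funext x
      beta_reduce
      rw [mul_assoc, Complex.mul_conj]
      push_cast
      ring]
    exact integral_ofReal
  have atomk : ∀ (c : EuclideanSpace ℝ (Fin d) → ℝ) (k : Fin d),
      IT c (pdC k u) (pdC k (fun y => (starRingEnd ℂ) (u y)))
      = ((∫ x, c x * Complex.normSq (pdC k u x) : ℝ) : ℂ) := by
    intro c k
    rw [show IT c (pdC k u) (pdC k (fun y => (starRingEnd ℂ) (u y)))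
        = ∫ x, ((c x * Complex.normSq (pdC k u x) : ℝ) : ℂ) from by
      unfold IT
      congr 1; funext x
      rw [hVc k x, mul_assoc, Complex.mul_conj]
      push_cast
      ring]
    exact integral_ofReal
  -- S6 as a real integral
  have hS6 : (∑ i, ∑ j, ∑ k, IT (pdR k (pdR k (pdR j (pdR j (pdR i (pdR i a)))))) u
        (fun y => (starRingEnd ℂ) (u y)))
      = ((∫ x, lapR (lapR (lapR a)) x * Complex.normSq (u x) : ℝ) : ℂ) := by
    rw [sum3_congr (fun i j k => atomu (pdR k (pdR k (pdR j (pdR j (pdR i (pdR i a)))))))]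
    rw [show (∑ i, ∑ j, ∑ k, ((∫ x, pdR k (pdR k (pdR j (pdR j (pdR i (pdR i a))))) x
          * Complex.normSq (u x) : ℝ) : ℂ))
        = ((∑ i, ∑ j, ∑ k, (∫ x, pdR k (pdR k (pdR j (pdR j (pdR i (pdR i a))))) x
          * Complex.normSq (u x)) : ℝ) : ℂ) from by push_cast; rfl]
    congr 1
    have hint6 : ∀ i j k : Fin d, Integrable (fun x =>
        pdR k (pdR k (pdR j (pdR j (pdR i (pdR i a))))) x * Complex.normSq (u x)) :=
      fun i j k => integrable_atomR
        (smR (smR (smR (smR (smR (smR ha i) i) j) j) k) k).continuous hcnsq hnsq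
    rw [show (fun x => lapR (lapR (lapR a)) x * Complex.normSq (u x))
        = fun x => ∑ k, ∑ j, ∑ i, (pdR k (pdR k (pdR j (pdR j (pdR i (pdR i a))))) x
            * Complex.normSq (u x)) from funext fun x => by
      rw [hL3fun x, Finset.sum_mul]
      refine Finset.sum_congr rfl fun k _ => ?_
      rw [Finset.sum_mul]
      refine Finset.sum_congr rfl fun j _ => Finset.sum_mul _ _ _]
    rw [integral_finset_sum _ (fun k _ => integrable_finset_sum _ (fun j _ =>
      integrable_finset_sum _ (fun i _ => hint6 i j k)))]
    refine Eq.trans (sum3_rev _) (Finset.sum_congr rfl fun k _ => Eq.trans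
      (Finset.sum_congr rfl fun j _ => (integral_finset_sum _ (fun i _ => hint6 i j k)).symm)
      (integral_finset_sum _ (fun j _ =>
        integrable_finset_sum _ (fun i _ => hint6 i j k))).symm)
  -- DD1 as a real integral
  have hDD : (∑ i, ∑ j, ∑ k, IT (pdR j (pdR j (pdR i (pdR i a)))) (pdC k u)
        (pdC k (fun y => (starRingEnd ℂ) (u y))))
      = ((∫ x, lapR (lapR a) x * ∑ k, Complex.normSq (pdC k u x) : ℝ) : ℂ) := by
    rw [sum3_congr (fun i j k => atomk (pdR j (pdR j (pdR i (pdR i a)))) k)]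
    rw [show (∑ i, ∑ j, ∑ k, ((∫ x, pdR j (pdR j (pdR i (pdR i a))) x
          * Complex.normSq (pdC k u x) : ℝ) : ℂ))
        = ((∑ i, ∑ j, ∑ k, (∫ x, pdR j (pdR j (pdR i (pdR i a))) x
          * Complex.normSq (pdC k u x)) : ℝ) : ℂ) from by push_cast; rfl]
    congr 1
    have hint4 : ∀ i j k : Fin d, Integrable (fun x =>
        pdR j (pdR j (pdR i (pdR i a))) x * Complex.normSq (pdC k u x)) :=
      fun i j k => integrable_atomR
        (smR (smR (smR (smR ha i) i) j) j).continuous (hcnsqk k) (hnsqk k)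
    rw [show (fun x => lapR (lapR a) x * ∑ k, Complex.normSq (pdC k u x))
        = fun x => ∑ j, ∑ i, ∑ k, (pdR j (pdR j (pdR i (pdR i a))) x
            * Complex.normSq (pdC k u x)) from funext fun x => by
      rw [hL2fun x, Finset.sum_mul]
      refine Finset.sum_congr rfl fun j _ => ?_
      rw [Finset.sum_mul]
      refine Finset.sum_congr rfl fun i _ => Finset.mul_sum _ _ _]
    rw [integral_finset_sum _ (fun j _ => integrable_finset_sum _ (fun i _ =>
      integrable_finset_sum _ (fun k _ => hint4 i j k)))]
    refine Eq.trans (sum3_comm12 _) (Finset.sum_congr rfl fun j _ => Eq.trans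
      (Finset.sum_congr rfl fun i _ => (integral_finset_sum _ (fun k _ => hint4 i j k)).symm)
      (integral_finset_sum _ (fun i _ =>
        integrable_finset_sum _ (fun k _ => hint4 i j k))).symm)
  -- the Z integral
  have hZed : (∫ x, ∑ j, ∑ k, pdC j u x * (pdR j (pdR k (lapR a)) x : ℂ)
        * pdC k (fun y => (starRingEnd ℂ) (u y)) x)
      = (∑ i, ∑ j, ∑ k, IT (pdR j (pdR k (pdR i (pdR i a)))) (pdC j u)
          (pdC k (fun y => (starRingEnd ℂ) (u y)))) := by
    have hintZ : ∀ i j k : Fin d, Integrable (fun x =>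
        ((pdR j (pdR k (pdR i (pdR i a))) x : ℝ) : ℂ) * pdC j u x
          * pdC k (fun y => (starRingEnd ℂ) (u y)) x) :=
      fun i j k => integrable_atom (smR (smR (smR (smR ha i) i) k) j).continuous
        (smC hu j).continuous (smC hcv k).continuous (csC husupp j)
    rw [show (fun x => ∑ j, ∑ k, pdC j u x * (pdR j (pdR k (lapR a)) x : ℂ)
          * pdC k (fun y => (starRingEnd ℂ) (u y)) x)
        = fun x => ∑ j, ∑ k, ∑ i, (((pdR j (pdR k (pdR i (pdR i a))) x : ℝ) : ℂ)
            * pdC j u x * pdC k (fun y => (starRingEnd ℂ) (u y)) x)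
        from funext fun x => by
      refine Finset.sum_congr rfl fun j _ => Finset.sum_congr rfl fun k _ => ?_
      rw [hZjk j k x]
      push_cast
      rw [Finset.mul_sum, Finset.sum_mul]
      exact Finset.sum_congr rfl fun i _ => by ring]
    rw [integral_finset_sum _ (fun j _ => integrable_finset_sum _ (fun k _ =>
      integrable_finset_sum _ (fun i _ => hintZ i j k)))]
    refine Eq.trans (Finset.sum_congr rfl (fun j _ => Eq.trans
      (integral_finset_sum _ (fun k _ => integrable_finset_sum _ (fun i _ => hintZ i j k)))
      (Finset.sum_congr rfl fun k _ =>
        integral_finset_sum _ (fun i _ => hintZ i j k)))) ?_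
    exact Eq.trans (sum3_comm23 (fun j k i => IT (pdR j (pdR k (pdR i (pdR i a)))) (pdC j u)
        (pdC k (fun y => (starRingEnd ℂ) (u y)))))
      (sum3_comm12 (fun j i k => IT (pdR j (pdR k (pdR i (pdR i a)))) (pdC j u)
        (pdC k (fun y => (starRingEnd ℂ) (u y)))))
  -- the W integral
  have hW : (∫ x, ∑ j, ∑ k, ∑ l, pdC j (pdC k u) x * (pdR k (pdR l a) x : ℂ)
        * pdC l (pdC j (fun y => (starRingEnd ℂ) (u y))) x)
      = (∑ j, ∑ k, ∑ l, IT (pdR k (pdR l a)) (pdC j (pdC k u))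
          (pdC l (pdC j (fun y => (starRingEnd ℂ) (u y))))) := by
    have hintW : ∀ j k l : Fin d, Integrable (fun x =>
        ((pdR k (pdR l a) x : ℝ) : ℂ) * pdC j (pdC k u) x
          * pdC l (pdC j (fun y => (starRingEnd ℂ) (u y))) x) :=
      fun j k l => integrable_atom (smR (smR ha l) k).continuous
        (smC (smC hu k) j).continuous (smC (smC hcv j) l).continuous (csC (csC husupp k) j)
    rw [show (fun x => ∑ j, ∑ k, ∑ l, pdC j (pdC k u) x * (pdR k (pdR l a) x : ℂ)
          * pdC l (pdC j (fun y => (starRingEnd ℂ) (u y))) x)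
        = fun x => ∑ j, ∑ k, ∑ l, (((pdR k (pdR l a) x : ℝ) : ℂ) * pdC j (pdC k u) x
            * pdC l (pdC j (fun y => (starRingEnd ℂ) (u y))) x)
        from funext fun x => by
      refine Finset.sum_congr rfl fun j _ => Finset.sum_congr rfl fun k _ =>
        Finset.sum_congr rfl fun l _ => by ring]
    rw [integral_finset_sum _ (fun j _ => integrable_finset_sum _ (fun k _ =>
      integrable_finset_sum _ (fun l _ => hintW j k l)))]
    exact Finset.sum_congr rfl (fun j _ => Eq.trans
      (integral_finset_sum _ (fun k _ => integrable_finset_sum _ (fun l _ => hintW j k l)))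
      (Finset.sum_congr rfl fun k _ =>
        integral_finset_sum _ (fun l _ => hintW j k l)))
  -- combine everything at the complex level
  have hmain : ((∫ x, (-(lapC (lapC u) x)) * ((lapR a x : ℂ) * (starRingEnd ℂ) (u x)
          + 2 * ∑ j, (pdR j a x : ℂ) * pdC j (fun y => (starRingEnd ℂ) (u y)) x)))
      + ((starRingEnd ℂ) (∫ x, (-(lapC (lapC u) x)) * ((lapR a x : ℂ) * (starRingEnd ℂ) (u x)
          + 2 * ∑ j, (pdR j a x : ℂ) * pdC j (fun y => (starRingEnd ℂ) (u y)) x)))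
      = -((∫ x, lapR (lapR (lapR a)) x * Complex.normSq (u x) : ℝ) : ℂ)
        + 2 * ((∫ x, lapR (lapR a) x * ∑ k, Complex.normSq (pdC k u x) : ℝ) : ℂ)
        + 4 * (∫ x, ∑ j, ∑ k, pdC j u x * (pdR j (pdR k (lapR a)) x : ℂ)
            * pdC k (fun y => (starRingEnd ℂ) (u y)) x)
        - 8 * (∫ x, ∑ j, ∑ k, ∑ l, pdC j (pdC k u) x * (pdR k (pdR l a) x : ℂ)
            * pdC l (pdC j (fun y => (starRingEnd ℂ) (u y))) x) := by
    linear_combination hX + hXc - key - hS6 + 2*hDD - 4*hZed + 8*hW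
  -- take real parts
  have hneg : (∫ x, (-(lapR (lapR (lapR a)) x)) * Complex.normSq (u x))
      = -(∫ x, lapR (lapR (lapR a)) x * Complex.normSq (u x)) := by
    rw [show (fun x => (-(lapR (lapR (lapR a)) x)) * Complex.normSq (u x))
        = fun x => -(lapR (lapR (lapR a)) x * Complex.normSq (u x))
      from funext fun x => by ring]
    exact integral_neg _
  have h2re : 2 * (∫ x, (-(lapC (lapC u) x)) * ((lapR a x : ℂ) * (starRingEnd ℂ) (u x)
        + 2 * ∑ j, (pdR j a x : ℂ) * pdC j (fun y => (starRingEnd ℂ) (u y)) x)).re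
      = ((∫ x, (-(lapC (lapC u) x)) * ((lapR a x : ℂ) * (starRingEnd ℂ) (u x)
          + 2 * ∑ j, (pdR j a x : ℂ) * pdC j (fun y => (starRingEnd ℂ) (u y)) x))
        + ((starRingEnd ℂ) (∫ x, (-(lapC (lapC u) x)) * ((lapR a x : ℂ) * (starRingEnd ℂ) (u x)
          + 2 * ∑ j, (pdR j a x : ℂ) * pdC j (fun y => (starRingEnd ℂ) (u y)) x)))).re := by
    rw [Complex.add_conj, Complex.ofReal_re]
  rw [h2re, hmain, hneg]
  simp only [Complex.add_re, Complex.sub_re, Complex.neg_re, Complex.ofReal_re]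
  have hre4 : ∀ (n : ℝ) (z : ℂ), ((n : ℂ) * z).re = n * z.re := fun n z => by
    simp [Complex.mul_re]
  have e2 : ((2 : ℂ) * ((∫ x, lapR (lapR a) x * ∑ k, Complex.normSq (pdC k u x) : ℝ) : ℂ)).re
      = 2 * (∫ x, lapR (lapR a) x * ∑ k, Complex.normSq (pdC k u x)) := by
    rw [(by norm_num : ((2:ℂ)) = ((2:ℝ):ℂ)), hre4, Complex.ofReal_re]
  have e4 : ∀ z : ℂ, ((4 : ℂ) * z).re = 4 * z.re := fun z => by
    rw [(by norm_num : ((4:ℂ)) = ((4:ℝ):ℂ)), hre4]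
  have e8 : ∀ z : ℂ, ((8 : ℂ) * z).re = 8 * z.re := fun z => by
    rw [(by norm_num : ((8:ℂ)) = ((8:ℝ):ℂ)), hre4]
  rw [e2, e4, e8]


end
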